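/- arXiv:1210.3664 — 4 statements merged into one kernel-verified Lean document; each statement's English description precedes it below -/
import Mathlib

section
/- Let d, k, t be integers with 1 ≤ k ≤ d and t ≥ 1, and let u_0, …, u_{g−1} be a repair-group configuration for (k,t). Then, with the minimum-bandwidth cooperative regenerating (MBCR) normalization β = 2, β' = 1, α = 2d + t − 1, the cut-set value satisfies, for every such configuration, Σ_{i=0}^{g−1} u_i · min( 2d + t − 1 , 2(d − s_i) + (t − u_i) ) = k(2d + t − k). In particular the min-cut file size bound at the MBCR point is exactly M = k(2d + t − k). -/
/-! Since `s_i ≥ 0` and `u_i ≥ 1`, the minimum is always its second argument, so the sum is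
`(2d + t) k - Σ u_i (2 s_i + u_i)`, and `Σ u_i (2 s_i + u_i) = (Σ u_i)² = k²`. -/

section PrefixSums

variable {ι R : Type*} [Fintype ι] [LinearOrder ι]

/- Expanding `(∑ u)²` and sorting the pairs `(i, j)` by whether `j < i`, `j = i` or `i < j`;
the last kind is the first with the roles swapped. -/
theorem sq_sum_eq_sum_mul_two_mul_sum_lt_add [CommRing R] (u : ι → R) :
    (∑ i, u i) ^ 2 = ∑ i, u i * (2 * ∑ j, (if j < i then u j else 0) + u i) := by
  have split : ∀ i j, u i * u j = ((if j < i then u i * u j else 0) +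
      (if i = j then u i * u j else 0)) + (if i < j then u i * u j else 0) := by
    intro i j
    rcases lt_trichotomy i j with h | rfl | h
    · simp [h, h.ne, h.not_gt]
    · simp
    · simp [h, h.ne', h.not_gt]
  have swap : ∑ i, ∑ j, (if i < j then u i * u j else 0) =
      ∑ i, ∑ j, (if j < i then u i * u j else 0) := by
    rw [Finset.sum_comm]
    exact Finset.sum_congr rfl fun i _ => Finset.sum_congr rfl fun j _ => by rw [mul_comm]
  calc (∑ i, u i) ^ 2 = ∑ i, ∑ j, u i * u j := by rw [sq, Finset.sum_mul_sum]
    _ = ∑ i, ∑ j, (if j < i then u i * u j else 0) + ∑ i, u i * u i +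
          ∑ i, ∑ j, (if i < j then u i * u j else 0) := by
      rw [Finset.sum_congr rfl fun i _ => Finset.sum_congr rfl fun j _ => split i j]
      simp only [Finset.sum_add_distrib, Finset.sum_ite_eq, Finset.mem_univ, if_true]
    _ = 2 * ∑ i, u i * ∑ j, (if j < i then u j else 0) + ∑ i, u i * u i := by
      rw [swap, two_mul]
      simp only [Finset.mul_sum, mul_ite, mul_zero]
      abel
    _ = ∑ i, u i * (2 * ∑ j, (if j < i then u j else 0) + u i) := by
      rw [Finset.mul_sum, ← Finset.sum_add_distrib]
      exact Finset.sum_congr rfl fun i _ => by ring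

theorem sum_ite_lt_nonneg [AddCommMonoid R] [PartialOrder R] [IsOrderedAddMonoid R]
    {u : ι → R} (hu : ∀ j, 0 ≤ u j) (i : ι) :
    0 ≤ ∑ j, if j < i then u j else 0 :=
  Finset.sum_nonneg fun j _ => by split_ifs <;> simp [hu j]

end PrefixSums

theorem mbcr_cutset_value_general (d k t : ℤ)
    (g : ℕ) (u : Fin g → ℤ)
    (hu : ∀ i, 1 ≤ u i ∧ u i ≤ t)
    (hsum : ∑ i, u i = k) :
    ∑ i : Fin g, u i *
        min (2 * d + t - 1)
          (2 * (d - ∑ j : Fin g, if (j : ℕ) < (i : ℕ) then u j else 0) + (t - u i)) =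
      k * (2 * d + t - k) := by
  simp_rw [Fin.val_fin_lt]
  have hmin : ∀ i : Fin g, min (2 * d + t - 1)
      (2 * (d - ∑ j, if j < i then u j else 0) + (t - u i)) =
        2 * (d - ∑ j, if j < i then u j else 0) + (t - u i) := fun i =>
    min_eq_right <| by
      linarith [(hu i).1, sum_ite_lt_nonneg (fun j => zero_le_one.trans (hu j).1) i]
  calc ∑ i, u i * min (2 * d + t - 1)
          (2 * (d - ∑ j, if j < i then u j else 0) + (t - u i))
      = (∑ i, u i) * (2 * d + t) -
          ∑ i, u i * (2 * ∑ j, (if j < i then u j else 0) + u i) := by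
        rw [Finset.sum_mul, ← Finset.sum_sub_distrib]
        exact Finset.sum_congr rfl fun i _ => by rw [hmin]; ring
    _ = k * (2 * d + t - k) := by
        rw [← sq_sum_eq_sum_mul_two_mul_sum_lt_add, hsum]
        ring

/-- At the MBCR point (`β = 2`, `β' = 1`, `α = 2d + t - 1`), the cut-set value of every
repair-group configuration `u₀, …, u_{g-1}` for `(k, t)` equals `k (2d + t - k)`. -/
theorem mbcr_cutset_value (d k t : ℤ) (hk : 1 ≤ k) (hkd : k ≤ d) (ht : 1 ≤ t)
    (g : ℕ) (u : Fin g → ℤ)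
    (hu : ∀ i, 1 ≤ u i ∧ u i ≤ t)
    (hsum : ∑ i, u i = k) :
    ∑ i : Fin g, u i *
        min (2 * d + t - 1)
          (2 * (d - ∑ j : Fin g, if (j : ℕ) < (i : ℕ) then u j else 0) + (t - u i)) =
      k * (2 * d + t - k) :=
  mbcr_cutset_value_general d k t g u hu hsum
end

section
/- Let d, t, a, b, k, ℓ be integers with t ≥ 1, a ≥ 1, 0 ≤ b < t, k = a·t + b, d ≥ k, and 0 ≤ ℓ ≤ a·t. Write ã = ⌊ℓ/t⌋. Then the maximum of Σ_{i=0}^{a−1} 2·l_i·(d − i·t) + l_a·( 2(d − a·t) + (t − b) ), taken over all integer tuples (l_0, …, l_a) with 0 ≤ l_i ≤ t for every i and Σ_{i=0}^{a} l_i = ℓ, equals 2ℓ(d − ã·t) + t²·ã·(ã + 1). -/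
/-!
The objective is `∑ cᵢ lᵢ` with coefficients `cᵢ` non-increasing in `i`: consecutive ones drop
by `2t`, except the last, which drops by `t + b ≥ 0`. Let `g` be the greedy allocation. Any
feasible `l` has `lᵢ ≤ t = gᵢ` before block `ã` and `lᵢ ≥ 0 = gᵢ` after it, so
`∑ cᵢ (lᵢ - gᵢ) ≤ c_ã ∑ (lᵢ - gᵢ) = 0`. The value of `g` is a sum of an arithmetic progression.
-/

open Finset

theorem Finset.sum_mul_le_sum_mul_of_antitone_of_single_crossing {ι R : Type*} [LinearOrder ι]
    [Ring R] [PartialOrder R] [IsOrderedRing R] (s : Finset ι) {c x y : ι → R} (m : ι)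
    (hc : Antitone c) (hlt : ∀ i ∈ s, i < m → x i ≤ y i) (hgt : ∀ i ∈ s, m < i → y i ≤ x i)
    (hsum : ∑ i ∈ s, x i = ∑ i ∈ s, y i) :
    ∑ i ∈ s, c i * x i ≤ ∑ i ∈ s, c i * y i := by
  have hterm : ∀ i ∈ s, c i * (x i - y i) ≤ c m * (x i - y i) := by
    intro i hi
    rcases lt_trichotomy i m with him | rfl | hmi
    · exact mul_le_mul_of_nonpos_right (hc him.le) (sub_nonpos.2 (hlt i hi him))
    · exact le_rfl
    · exact mul_le_mul_of_nonneg_right (hc hmi.le) (sub_nonneg.2 (hgt i hi hmi))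
  have := sum_le_sum hterm
  rw [← mul_sum, sum_sub_distrib, hsum, sub_self, mul_zero] at this
  simpa only [mul_sub, sum_sub_distrib, sub_nonpos] using this

def greedyAlloc {R : Type*} [Zero R] (t r : R) (q i : ℕ) : R :=
  if i < q then t else if i = q then r else 0

section greedyAlloc

variable {R : Type*} (t r : R) {q i : ℕ}

theorem greedyAlloc_of_lt [Zero R] (h : i < q) : greedyAlloc t r q i = t := if_pos h

theorem greedyAlloc_self [Zero R] (q : ℕ) : greedyAlloc t r q q = r := by
  rw [greedyAlloc, if_neg (lt_irrefl q), if_pos rfl]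

theorem greedyAlloc_of_gt [Zero R] (h : q < i) : greedyAlloc t r q i = 0 := by
  rw [greedyAlloc, if_neg h.not_gt, if_neg h.ne']

theorem greedyAlloc_mem_Icc [Zero R] [Preorder R] {t r : R} (hr0 : 0 ≤ r) (hrt : r ≤ t)
    (q i : ℕ) : greedyAlloc t r q i ∈ Set.Icc 0 t := by
  unfold greedyAlloc
  split_ifs
  exacts [⟨hr0.trans hrt, le_rfl⟩, ⟨hr0, hrt⟩, ⟨le_rfl, hr0.trans hrt⟩]

theorem sum_range_mul_greedyAlloc [CommRing R] (f : ℕ → R) {n : ℕ} (hq : q < n) :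
    ∑ i ∈ range n, f i * greedyAlloc t r q i = t * ∑ i ∈ range q, f i + r * f q := by
  obtain ⟨k, rfl⟩ := Nat.exists_eq_add_of_le (show q + 1 ≤ n from hq)
  have htail : ∑ i ∈ range k, f (q + 1 + i) * greedyAlloc t r q (q + 1 + i) = 0 :=
    sum_eq_zero fun i _ => by rw [greedyAlloc_of_gt t r (by omega), mul_zero]
  rw [sum_range_add, htail, add_zero, sum_range_succ, mul_sum, greedyAlloc_self, mul_comm r]
  congr 1
  exact sum_congr rfl fun i hi => by rw [greedyAlloc_of_lt t r (mem_range.1 hi), mul_comm]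

theorem sum_range_greedyAlloc [CommRing R] {n : ℕ} (hq : q < n) :
    ∑ i ∈ range n, greedyAlloc t r q i = q * t + r := by
  simpa [mul_comm] using sum_range_mul_greedyAlloc t r 1 hq

end greedyAlloc

theorem sum_range_two_mul_sub_mul (d t : ℤ) (q : ℕ) :
    ∑ i ∈ range q, 2 * (d - i * t) = 2 * q * d - q * (q - 1) * t := by
  induction q with
  | zero => simp
  | succ q ih => rw [sum_range_succ, ih]; push_cast; ring

def mbcrCoeff (d t b : ℤ) (a i : ℕ) : ℤ :=
  2 * (d - i * t) + if i = a then t - b else 0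

theorem antitone_mbcrCoeff {t b : ℤ} (d : ℤ) (a : ℕ) (ht : 0 ≤ t) (hb : 0 ≤ b) :
    Antitone fun i : Fin (a + 1) => mbcrCoeff d t b a i := by
  intro i j (hij : (i : ℕ) ≤ j)
  have hja : (j : ℕ) ≤ a := Nat.lt_succ_iff.1 j.isLt
  have hmul : ((i : ℕ) : ℤ) * t ≤ (j : ℕ) * t := mul_le_mul_of_nonneg_right (by omega) ht
  simp only [mbcrCoeff]
  split_ifs with hj hi hi
  · rw [show (i : ℕ) = j by omega]
  · have := mul_le_mul_of_nonneg_right (show ((i : ℕ) : ℤ) + 1 ≤ (j : ℕ) by omega) ht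
    linarith
  · omega
  · linarith

theorem objective_eq_sum_mbcrCoeff_mul (d t b : ℤ) (a : ℕ) (l : Fin (a + 1) → ℤ) :
    (∑ i : Fin a, 2 * l i.castSucc * (d - ((i : ℕ) : ℤ) * t)) +
        l (Fin.last a) * (2 * (d - (a : ℤ) * t) + (t - b)) =
      ∑ i : Fin (a + 1), mbcrCoeff d t b a i * l i := by
  rw [Fin.sum_univ_castSucc]
  congr 1
  · refine sum_congr rfl fun i _ => ?_
    rw [mbcrCoeff, Fin.val_castSucc, if_neg i.is_lt.ne]
    ring
  · rw [mbcrCoeff, Fin.val_last, if_pos rfl]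
    ring

theorem sum_mbcrCoeff_mul_greedyAlloc (d t b r : ℤ) {a q : ℕ} (hqa : q ≤ a)
    (hr : q = a → r = 0) :
    ∑ i ∈ range (a + 1), mbcrCoeff d t b a i * greedyAlloc t r q i =
      t * (2 * q * d - q * (q - 1) * t) + 2 * r * (d - q * t) := by
  have hfull : ∑ i ∈ range q, mbcrCoeff d t b a i = ∑ i ∈ range q, 2 * (d - i * t) :=
    sum_congr rfl fun i hi => by
      rw [mbcrCoeff, if_neg (by have := mem_range.1 hi; omega), add_zero]
  have hlast : r * mbcrCoeff d t b a q = 2 * r * (d - q * t) := by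
    rcases eq_or_ne q a with rfl | hqa
    · simp [hr rfl]
    · rw [mbcrCoeff, if_neg hqa]; ring
  rw [sum_range_mul_greedyAlloc t r _ (Nat.lt_succ_of_le hqa), hfull, sum_range_two_mul_sub_mul,
    hlast]

theorem mbcr_worst_case_eavesdropper_low_general (d t b L : ℤ) (a : ℕ)
    (ht : 1 ≤ t) (hb0 : 0 ≤ b)
    (hL0 : 0 ≤ L) (hLat : L ≤ (a : ℤ) * t) :
    IsGreatest
      { S : ℤ | ∃ l : Fin (a + 1) → ℤ,
          (∀ i, 0 ≤ l i ∧ l i ≤ t) ∧ (∑ i, l i = L) ∧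
          S = (∑ i : Fin a, 2 * l i.castSucc * (d - ((i : ℕ) : ℤ) * t)) +
              l (Fin.last a) * (2 * (d - (a : ℤ) * t) + (t - b)) }
      (2 * L * (d - (L / t) * t) + t ^ 2 * (L / t) * (L / t + 1)) := by
  obtain ⟨q, hq⟩ := Int.eq_ofNat_of_zero_le (Int.ediv_nonneg hL0 (by omega : 0 ≤ t))
  set r := L % t
  have hL : L = q * t + r := by rw [← hq, mul_comm, Int.mul_ediv_add_emod]
  have hr : 0 ≤ r ∧ r < t := ⟨Int.emod_nonneg L (by omega), Int.emod_lt_of_pos L (by omega)⟩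
  have hqa : q ≤ a := by exact_mod_cast hq ▸ Int.ediv_le_of_le_mul (by omega) hLat
  have hq_lt : q < a + 1 := Nat.lt_succ_of_le hqa
  set g : Fin (a + 1) → ℤ := fun i => greedyAlloc t r q i
  have hg_mem (i : Fin (a + 1)) : 0 ≤ g i ∧ g i ≤ t :=
    greedyAlloc_mem_Icc hr.1 hr.2.le q i
  have hg_sum : ∑ i, g i = L := by
    rw [Fin.sum_univ_eq_sum_range (greedyAlloc t r q), sum_range_greedyAlloc t r hq_lt, hL]
  have hg_value : ∑ i : Fin (a + 1), mbcrCoeff d t b a i * g i =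
      2 * L * (d - (L / t) * t) + t ^ 2 * (L / t) * (L / t + 1) := by
    rw [Fin.sum_univ_eq_sum_range (fun i => mbcrCoeff d t b a i * greedyAlloc t r q i),
      sum_mbcrCoeff_mul_greedyAlloc d t b r hqa (by rintro rfl; linarith), hq, hL]
    ring
  refine ⟨⟨g, hg_mem, hg_sum, by rw [objective_eq_sum_mbcrCoeff_mul, hg_value]⟩, ?_⟩
  rintro S ⟨l, hl, hl_sum, rfl⟩
  rw [objective_eq_sum_mbcrCoeff_mul, ← hg_value]
  refine sum_mul_le_sum_mul_of_antitone_of_single_crossing _ ⟨q, hq_lt⟩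
    (antitone_mbcrCoeff d a (by omega) hb0) (fun i _ hi => ?_) (fun i _ hi => ?_)
    (hl_sum.trans hg_sum.symm)
  · exact (hl i).2.trans (greedyAlloc_of_lt t r (show (i : ℕ) < q from hi)).ge
  · exact (greedyAlloc_of_gt t r (show q < (i : ℕ) from hi)).le.trans (hl i).1

/-- Worst-case eavesdropper allocation (equation (16) of the paper) at the MBCR
normalization `β = 2`, `β' = 1`, in the case `L ≤ a·t`: the maximum of
`∑_{i<a} 2 lᵢ (d - i t) + lₐ (2(d - a t) + (t - b))` over all allocations
`0 ≤ lᵢ ≤ t` with `∑ lᵢ = L` equals `2L(d - ⌊L/t⌋ t) + t² ⌊L/t⌋ (⌊L/t⌋ + 1)`. -/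
theorem mbcr_worst_case_eavesdropper_low (d t b k L : ℤ) (a : ℕ)
    (ht : 1 ≤ t) (ha : 1 ≤ a) (hb0 : 0 ≤ b) (hbt : b < t)
    (hk : k = (a : ℤ) * t + b) (hd : k ≤ d)
    (hL0 : 0 ≤ L) (hLat : L ≤ (a : ℤ) * t) :
    IsGreatest
      { S : ℤ | ∃ l : Fin (a + 1) → ℤ,
          (∀ i, 0 ≤ l i ∧ l i ≤ t) ∧ (∑ i, l i = L) ∧
          S = (∑ i : Fin a, 2 * l i.castSucc * (d - ((i : ℕ) : ℤ) * t)) +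
              l (Fin.last a) * (2 * (d - (a : ℤ) * t) + (t - b)) }
      (2 * L * (d - (L / t) * t) + t ^ 2 * (L / t) * (L / t + 1)) :=
  mbcr_worst_case_eavesdropper_low_general d t b L a ht hb0 hL0 hLat
end

section
/- Let d, t, a, b, k, ℓ be integers with t ≥ 1, a ≥ 1, 0 ≤ b < t, k = a·t + b, d ≥ k, and a·t ≤ ℓ ≤ k. Then the maximum of Σ_{i=0}^{a−1} 2·l_i·(d − i·t) + l_a·( 2(d − a·t) + (t − b) ), taken over all integer tuples (l_0, …, l_a) with 0 ≤ l_i ≤ t for every i and Σ_{i=0}^{a} l_i = ℓ, equals 2ℓ(d − a·t) + t²·a·(a + 1) + (ℓ − a·t)(t − b). -/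
/-!
The objective is linear in the allocation. Every full group `i < a` has weight
`wᵢ = 2(d - i t)`, at least the weight `c = 2(d - a t) + (t - b)` of the last group, since
`wᵢ - c = 2(a - i)t - (t - b) ≥ t + b ≥ 0`. Eliminating `l_a = ℓ - ∑_{i<a} lᵢ` turns the objective
into `∑_{i<a} (wᵢ - c) lᵢ + c ℓ`, which is monotone in each `lᵢ`; so the full groups are saturated
at the optimum, and the maximum follows from Gauss's sum `∑_{i<a} i = a(a-1)/2`.
-/

open Finset

theorem Fin.sum_val_cast_mul_two {R : Type*} [CommRing R] (n : ℕ) :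
    (∑ i : Fin n, ((i : ℕ) : R)) * 2 = n * (n - 1) := by
  induction n with
  | zero => simp
  | succ n ih =>
    simp only [Fin.sum_univ_castSucc, Fin.val_castSucc, Fin.val_last, add_mul, ih]
    push_cast
    ring

theorem sum_mul_add_mul_eq_of_sum_add_eq {ι R : Type*} [CommRing R] (s : Finset ι)
    (w l : ι → R) (c x L : R)
    (hsum : ∑ i ∈ s, l i + x = L) :
    ∑ i ∈ s, w i * l i + c * x = ∑ i ∈ s, (w i - c) * l i + c * L := by
  simp only [← hsum, sub_mul, sum_sub_distrib, mul_add, mul_sum]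
  ring

/-- The right-hand side is the value at `l i = t`: saturating the heavier slots is optimal. -/
theorem sum_mul_add_mul_le_of_le_weight {ι R : Type*} [CommRing R] [PartialOrder R]
    [IsOrderedRing R] (s : Finset ι) (w l : ι → R) (c x t L : R)
    (hw : ∀ i ∈ s, c ≤ w i) (hl : ∀ i ∈ s, l i ≤ t) (hsum : ∑ i ∈ s, l i + x = L) :
    ∑ i ∈ s, w i * l i + c * x ≤ ∑ i ∈ s, (w i - c) * t + c * L := by
  rw [sum_mul_add_mul_eq_of_sum_add_eq s w l c x L hsum]
  gcongr with i hi
  · exact sub_nonneg.2 (hw i hi)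
  · exact hl i hi

theorem last_weight_le_weight (d : ℤ) {t b : ℤ} {i a : ℕ} (hia : i < a) (hb : 0 ≤ b)
    (ht : 0 ≤ t) : 2 * (d - (a : ℤ) * t) + (t - b) ≤ 2 * (d - (i : ℤ) * t) := by
  have hgap : (1 : ℤ) ≤ a - i := by omega
  nlinarith

theorem sum_fin_weight_sub_mul (d t c : ℤ) (a : ℕ) :
    ∑ i : Fin a, (2 * (d - ((i : ℕ) : ℤ) * t) - c) * t
      = 2 * a * t * d - t ^ 2 * (a * (a - 1)) - a * t * c := by
  have hgauss := Fin.sum_val_cast_mul_two (R := ℤ) a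
  calc ∑ i : Fin a, (2 * (d - ((i : ℕ) : ℤ) * t) - c) * t
      = ∑ i : Fin a, ((2 * t * d - t * c) - t ^ 2 * 2 * ((i : ℕ) : ℤ)) :=
        sum_congr rfl fun i _ => by ring
    _ = a * (2 * t * d - t * c) - t ^ 2 * 2 * ∑ i : Fin a, ((i : ℕ) : ℤ) := by
        rw [sum_sub_distrib, sum_const, card_univ, Fintype.card_fin, ← mul_sum, nsmul_eq_mul]
    _ = 2 * a * t * d - t ^ 2 * (a * (a - 1)) - a * t * c := by
        linear_combination (-t ^ 2) * hgauss

theorem mbcr_worst_case_eavesdropper_high_general (d t b k L : ℤ) (a : ℕ)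
    (hbt : b < t)
    (hk : k = (a : ℤ) * t + b)
    (hatL : (a : ℤ) * t ≤ L) (hLk : L ≤ k) :
    IsGreatest
      { S : ℤ | ∃ l : Fin (a + 1) → ℤ,
          (∀ i, 0 ≤ l i ∧ l i ≤ t) ∧ (∑ i, l i = L) ∧
          S = (∑ i : Fin a, 2 * l i.castSucc * (d - ((i : ℕ) : ℤ) * t)) +
              l (Fin.last a) * (2 * (d - (a : ℤ) * t) + (t - b)) }
      (2 * L * (d - (a : ℤ) * t) + t ^ 2 * a * ((a : ℤ) + 1) + (L - (a : ℤ) * t) * (t - b)) := by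
  have hb : 0 ≤ b := by linarith
  have ht : 0 ≤ t := by linarith
  set c := 2 * (d - (a : ℤ) * t) + (t - b)
  have hmax : 2 * L * (d - (a : ℤ) * t) + t ^ 2 * a * ((a : ℤ) + 1) + (L - (a : ℤ) * t) * (t - b)
      = ∑ i : Fin a, (2 * (d - ((i : ℕ) : ℤ) * t) - c) * t + c * L := by
    rw [sum_fin_weight_sub_mul]; ring
  rw [hmax]
  constructor
  · refine ⟨Fin.snoc (fun _ => t) (L - a * t), fun i => ?_, ?_, ?_⟩
    · induction i using Fin.lastCases with
      | last => simp only [Fin.snoc_last]; constructor <;> linarith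
      | cast i => simp only [Fin.snoc_castSucc]; constructor <;> linarith
    · simp only [Fin.sum_univ_castSucc, Fin.snoc_castSucc, Fin.snoc_last, sum_const, card_univ,
        Fintype.card_fin, nsmul_eq_mul]
      ring
    · simp only [Fin.snoc_castSucc, Fin.snoc_last]
      rw [← sum_mul_add_mul_eq_of_sum_add_eq univ (fun i : Fin a => 2 * (d - (i : ℕ) * t))
        (fun _ => t) c (L - a * t) L (by simp), mul_comm (L - _)]
      congr 1
      exact sum_congr rfl fun i _ => by ring
  · rintro S ⟨l, hl, hsum, rfl⟩
    rw [Fin.sum_univ_castSucc] at hsum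
    have hw : ∀ i ∈ (univ : Finset (Fin a)), c ≤ 2 * (d - ((i : ℕ) : ℤ) * t) :=
      fun i _ => last_weight_le_weight d i.isLt hb ht
    calc _ = ∑ i : Fin a, 2 * (d - ((i : ℕ) : ℤ) * t) * l i.castSucc + c * l (Fin.last a) := by
          rw [mul_comm _ c]; exact congrArg (· + _) (sum_congr rfl fun i _ => by ring)
      _ ≤ _ := sum_mul_add_mul_le_of_le_weight _ _ _ c _ t L hw (fun i _ => (hl _).2) hsum

/-- Worst-case eavesdropper allocation (equation (16) of the paper) at the MBCR
normalization `β = 2`, `β' = 1`, in the case `a·t ≤ L ≤ k`: the maximum of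
`∑_{i<a} 2 lᵢ (d - i t) + lₐ (2(d - a t) + (t - b))` over all allocations
`0 ≤ lᵢ ≤ t` with `∑ lᵢ = L` equals `2L(d - a t) + t² a (a + 1) + (L - a t)(t - b)`. -/
theorem mbcr_worst_case_eavesdropper_high (d t b k L : ℤ) (a : ℕ)
    (ht : 1 ≤ t) (ha : 1 ≤ a) (hb0 : 0 ≤ b) (hbt : b < t)
    (hk : k = (a : ℤ) * t + b) (hd : k ≤ d)
    (hatL : (a : ℤ) * t ≤ L) (hLk : L ≤ k) :
    IsGreatest
      { S : ℤ | ∃ l : Fin (a + 1) → ℤ,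
          (∀ i, 0 ≤ l i ∧ l i ≤ t) ∧ (∑ i, l i = L) ∧
          S = (∑ i : Fin a, 2 * l i.castSucc * (d - ((i : ℕ) : ℤ) * t)) +
              l (Fin.last a) * (2 * (d - (a : ℤ) * t) + (t - b)) }
      (2 * L * (d - (a : ℤ) * t) + t ^ 2 * a * ((a : ℤ) + 1) + (L - (a : ℤ) * t) * (t - b)) :=
  mbcr_worst_case_eavesdropper_high_general d t b k L a hbt hk hatL hLk
end

section
/- Let n, k, t, ℓ be integers with t ≥ 1, 0 ≤ ℓ < k, and k ≤ n − t (so that d = n − t ≥ k). Then the secrecy-normalized repair bandwidth at the MBCR point with t simultaneous repairs is at least that with single repairs: (2n − t − 1) / ( (k − ℓ)(2n − t − k − ℓ) ) ≥ (2n − 2) / ( (k − ℓ)(2n − 1 − k − ℓ) ). Moreover, if t ≥ 2 and k ≥ 2 the inequality is strict; equivalently, (2n − t − 1)(2n − 1 − k − ℓ) − (2n − 2)(2n − t − k − ℓ) = (t − 1)(k + ℓ − 1). -/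
/-! Writing `a = k - L`, `u = 2n - t - k - L` and `v = 2n - 1 - k - L`, all positive because
`k ≤ n - t`, the comparison `(2n - 2) / (a v) ≤ (2n - t - 1) / (a u)` is equivalent to
`(2n - 2) u ≤ (2n - t - 1) v`, and the difference of the two sides is `(t - 1)(k + L - 1)`. -/

theorem mbcr_cross_difference {R : Type*} [CommRing R] (n k t L : R) :
    (2 * n - t - 1) * (2 * n - 1 - k - L) - (2 * n - 2) * (2 * n - t - k - L) =
      (t - 1) * (k + L - 1) := by
  ring

section
variable {K : Type*} [Field K]

/-- The secrecy-normalized repair bandwidth `γ / Mˢ` at the MBCR point with `d = n - t`. -/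
def mbcrSecureNRBW (n k t L : K) : K :=
  (2 * n - t - 1) / ((k - L) * (2 * n - t - k - L))

theorem mbcrSecureNRBW_one (n k L : K) :
    mbcrSecureNRBW n k 1 L = (2 * n - 2) / ((k - L) * (2 * n - 1 - k - L)) := by
  rw [mbcrSecureNRBW, sub_sub, one_add_one_eq_two]

variable [LinearOrder K] [IsStrictOrderedRing K]

theorem div_mul_le_div_mul_iff {a u v p q : K} (ha : 0 < a) (hu : 0 < u) (hv : 0 < v) :
    q / (a * v) ≤ p / (a * u) ↔ q * u ≤ p * v := by
  rw [div_le_div_iff₀ (mul_pos ha hv) (mul_pos ha hu), mul_left_comm q, mul_left_comm p,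
    mul_le_mul_iff_right₀ ha]

theorem div_mul_lt_div_mul_iff {a u v p q : K} (ha : 0 < a) (hu : 0 < u) (hv : 0 < v) :
    q / (a * v) < p / (a * u) ↔ q * u < p * v := by
  rw [div_lt_div_iff₀ (mul_pos ha hv) (mul_pos ha hu), mul_left_comm q, mul_left_comm p,
    mul_lt_mul_iff_right₀ ha]

variable {n k t L : K}

theorem mbcrSecureNRBW_one_le (ht : 1 ≤ t) (hkL : 1 ≤ k + L) (hLk : L < k) (hkn : k ≤ n - t) :
    mbcrSecureNRBW n k 1 L ≤ mbcrSecureNRBW n k t L := by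
  rw [mbcrSecureNRBW_one, mbcrSecureNRBW,
    div_mul_le_div_mul_iff (sub_pos.2 hLk) (by linarith) (by linarith), ← sub_nonneg,
    mbcr_cross_difference]
  exact mul_nonneg (by linarith) (by linarith)

theorem mbcrSecureNRBW_one_lt (ht : 1 < t) (hkL : 1 < k + L) (hLk : L < k) (hkn : k ≤ n - t) :
    mbcrSecureNRBW n k 1 L < mbcrSecureNRBW n k t L := by
  rw [mbcrSecureNRBW_one, mbcrSecureNRBW,
    div_mul_lt_div_mul_iff (sub_pos.2 hLk) (by linarith) (by linarith), ← sub_pos,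
    mbcr_cross_difference]
  exact mul_pos (by linarith) (by linarith)

end

/-- At the MBCR point with `L < k` eavesdropped nodes and `d = n - t`, the
secrecy-normalized repair bandwidth with `t` simultaneous repairs is at least that with
single repairs, strictly greater when `t ≥ 2` and `k ≥ 2`; the underlying integer
identity is `(2n-t-1)(2n-1-k-L) - (2n-2)(2n-t-k-L) = (t-1)(k+L-1)`. -/
theorem mbcr_secure_nrbw_cooperation (n k t L : ℤ) (ht : 1 ≤ t) (hL0 : 0 ≤ L)
    (hLk : L < k) (hkn : k ≤ n - t) :
    (2 * (n : ℝ) - t - 1) / (((k : ℝ) - L) * (2 * (n : ℝ) - t - k - L)) ≥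
        (2 * (n : ℝ) - 2) / (((k : ℝ) - L) * (2 * (n : ℝ) - 1 - k - L)) ∧
    (2 ≤ t → 2 ≤ k →
      (2 * (n : ℝ) - t - 1) / (((k : ℝ) - L) * (2 * (n : ℝ) - t - k - L)) >
        (2 * (n : ℝ) - 2) / (((k : ℝ) - L) * (2 * (n : ℝ) - 1 - k - L))) ∧
    (2 * n - t - 1) * (2 * n - 1 - k - L) - (2 * n - 2) * (2 * n - t - k - L) =
      (t - 1) * (k + L - 1) := by
  have hkL : (1 : ℝ) ≤ k + L := by exact_mod_cast (by omega : 1 ≤ k + L)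
  have hLk' : (L : ℝ) < k := by exact_mod_cast hLk
  have hkn' : (k : ℝ) ≤ n - t := by exact_mod_cast hkn
  refine ⟨?_, fun ht2 hk2 => ?_, mbcr_cross_difference n k t L⟩
  · rw [ge_iff_le, ← mbcrSecureNRBW_one]
    exact mbcrSecureNRBW_one_le (by exact_mod_cast ht) hkL hLk' hkn'
  · have hkL' : (1 : ℝ) < k + L := by exact_mod_cast (by omega : 1 < k + L)
    rw [gt_iff_lt, ← mbcrSecureNRBW_one]
    exact mbcrSecureNRBW_one_lt (by exact_mod_cast ht2) hkL' hLk' hkn'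
end
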